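/- arXiv:0908.3266 — 3 statements merged into one kernel-verified Lean document; each statement's English description precedes it below -/
import Mathlib

section
/- Let d ≥ 3 be odd, a_1,…,a_d ∈ F_q nonzero, S = {x ∈ F_q^d : ∑ a_j x_j² = 0}, and (dσ)^∨(m) = |S|^{−1} ∑_{x∈S} χ(x·m). Then (dσ)^∨(0,…,0) = 1, and there is a constant C independent of q such that |(dσ)^∨(m)| ≤ C q^{−(d−1)/2} for all m ≠ (0,…,0). -/
open Finset BigOperators
open scoped Classical

/-!
Let `η` be the quadratic character of `F_q` and `g = ∑_u η(u) χ(u)` its Gauss sum, so `|g| = √q`.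
Detect the quadric `Q(x) = ∑ a_j x_j² = 0` by orthogonality:
`q · ∑_{x ∈ S} χ(x·m) = ∑_t ∑_x χ(t Q(x) + x·m)`. The term `t = 0` is `q^d` if `m = 0` and vanishes
otherwise. For `t ≠ 0` the inner sum factors into one-variable sums which, after completing the
square, are `∑_y χ(b y² + y m) = χ(-m²/4b) η(b) g`. As `d` is odd, `η(t)^d = η(t)`, and what remains
is `∑_t η(t) χ(e/t) = η(e) g` with `e = -∑ m_j²/4a_j`. Hence
`q · ∑_{x ∈ S} χ(x·m) = q^d [m = 0] + η(∏ a_j) η(e) g^(d+1)`, which gives `|S| = q^(d-1)` and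
`|∑_{x ∈ S} χ(x·m)| ≤ q^((d-1)/2)` for `m ≠ 0`.
-/

lemma AddChar.map_sum_eq_prod {A M ι : Type*} [AddCommMonoid A] [CommMonoid M]
    (ψ : AddChar A M) (s : Finset ι) (f : ι → A) :
    ψ (∑ i ∈ s, f i) = ∏ i ∈ s, ψ (f i) := by
  induction s using Finset.cons_induction with
  | empty => simp
  | cons i s hi ih => rw [sum_cons, prod_cons, ψ.map_add_eq_mul, ih]

lemma AddChar.sum_pi_map_sum_eq_prod {A R ι : Type*} [AddCommMonoid A] [Fintype A]
    [CommSemiring R] [Fintype ι] [DecidableEq ι] (ψ : AddChar A R) (f : ι → A → A) :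
    ∑ x : ι → A, ψ (∑ j, f j (x j)) = ∏ j, ∑ y, ψ (f j y) := by
  simp only [ψ.map_sum_eq_prod, Fintype.prod_sum]

section QuadraticGaussSums

variable {F : Type*} [Field F] [Fintype F] {R : Type*} [CommRing R]

variable (F R) in
noncomputable def quadraticCharCast : MulChar F R :=
  (quadraticChar F).ringHomComp (Int.castRingHom R)

local notation "η" => quadraticCharCast F R

lemma quadraticCharCast_apply (t : F) : η t = quadraticChar F t := rfl

lemma quadraticCharCast_isQuadratic : (η).IsQuadratic :=
  (quadraticChar_isQuadratic F).comp _

lemma quadraticCharCast_zero : η 0 = 0 := by simp [quadraticCharCast_apply]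

lemma quadraticCharCast_mul_self {t : F} (ht : t ≠ 0) : η t * η t = 1 := by
  rw [quadraticCharCast_apply, ← Int.cast_mul, ← sq, quadraticChar_sq_one ht, Int.cast_one]

lemma quadraticCharCast_inv (t : F) : η t⁻¹ = η t := by
  rw [← MulChar.inv_apply', quadraticCharCast_isQuadratic.inv]

lemma quadraticCharCast_pow_odd {n : ℕ} (hn : Odd n) (t : F) : η t ^ n = η t := by
  rw [← MulChar.pow_apply' _ hn.pos.ne', quadraticCharCast_isQuadratic.pow_odd hn]

lemma sum_quadraticCharCast (hF : ringChar F ≠ 2) : ∑ t, η t = 0 := by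
  simp only [quadraticCharCast_apply, ← Int.cast_sum, quadraticChar_sum_zero hF, Int.cast_zero]

lemma quadraticCharCast_ne_one [CharZero R] (hF : ringChar F ≠ 2) : η ≠ 1 :=
  (MulChar.ringHomComp_ne_one_iff Int.cast_injective).mpr (quadraticChar_ne_one hF)

lemma quadraticCharCast_card_sqrts (hF : ringChar F ≠ 2) (u : F) :
    (#{x : F | x ^ 2 = u} : R) = η u + 1 := by
  have h := quadraticChar_card_sqrts hF u
  rw [Set.toFinset_ofPred] at h
  rw [quadraticCharCast_apply, ← Int.cast_natCast, h, Int.cast_add, Int.cast_one]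

variable {ψ : AddChar F R}

local notation "g" => gaussSum (quadraticCharCast F R) ψ

lemma sum_quadraticCharCast_mul_addChar_div (hF : ringChar F ≠ 2) (e : F) :
    ∑ t, η t * ψ (e / t) = η e * g := by
  rcases eq_or_ne e 0 with rfl | he
  · simp [sum_quadraticCharCast hF, quadraticCharCast_zero]
  · have hinv : Function.Involutive (e / · : F → F) := fun u => div_div_cancel₀ he
    rw [← hinv.bijective.sum_comp, gaussSum, mul_sum]
    refine sum_congr rfl fun u _ => ?_
    rw [div_div_cancel₀ he, div_eq_mul_inv, map_mul, quadraticCharCast_inv, mul_assoc]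

variable [IsDomain R]

lemma card_mul_sum_filter_eq_zero {ι : Type*} [Fintype ι] (hψ : ψ ≠ 1) (P L : ι → F) :
    (Fintype.card F : R) * ∑ x ∈ univ.filter (fun x => P x = 0), ψ (L x)
      = ∑ t, ∑ x, ψ (t * P x + L x) := by
  have horth (x : ι) : ∑ t, ψ (t * P x) = if P x = 0 then (Fintype.card F : R) else 0 := by
    exact_mod_cast AddChar.sum_mulShift (P x) (AddChar.IsPrimitive.of_ne_one hψ)
  simp only [sum_comm (γ := F), ψ.map_add_eq_mul, ← sum_mul, horth, ite_mul, zero_mul,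
    sum_ite, sum_const_zero, add_zero, mul_sum]

lemma sum_addChar_mul_sq (hF : ringChar F ≠ 2) (hψ : ψ ≠ 1) {b : F} (hb : b ≠ 0) :
    ∑ x, ψ (b * x ^ 2) = η b * g := by
  have hshift : ∑ u, ψ (b * u) = 0 := by
    simpa [mul_comm, hb] using AddChar.sum_mulShift b (AddChar.IsPrimitive.of_ne_one hψ)
  calc ∑ x, ψ (b * x ^ 2)
      = ∑ u, (#{x : F | x ^ 2 = u} : R) * ψ (b * u) := by
        rw [← sum_fiberwise' univ (· ^ 2) (fun u => ψ (b * u))]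
        simp
    _ = gaussSum η (ψ.mulShift b) := by
        simp only [quadraticCharCast_card_sqrts hF, add_mul, one_mul, sum_add_distrib, hshift,
          add_zero, gaussSum, AddChar.mulShift_apply]
    _ = η b * g := by
        rw [← gaussSum_mulShift η ψ (Units.mk0 b hb), Units.val_mk0, ← mul_assoc,
          quadraticCharCast_mul_self hb, one_mul]

lemma sum_addChar_mul_sq_add_mul (hF : ringChar F ≠ 2) (hψ : ψ ≠ 1) {b : F} (hb : b ≠ 0) (m : F) :
    ∑ x, ψ (b * x ^ 2 + x * m) = ψ (-(m ^ 2 / (4 * b))) * (η b * g) := by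
  have h2 : (2 : F) ≠ 0 := Ring.two_ne_zero hF
  have h4 : (4 : F) ≠ 0 := by
    rw [show (4 : F) = 2 ^ 2 by norm_num]
    exact pow_ne_zero 2 h2
  have complete_square (y : F) : b * (y - m / (2 * b)) ^ 2 + (y - m / (2 * b)) * m
      = -(m ^ 2 / (4 * b)) + b * y ^ 2 := by
    field_simp
    ring
  rw [← (Equiv.subRight (m / (2 * b))).sum_comp]
  simp only [Equiv.subRight_apply, complete_square, ψ.map_add_eq_mul, ← mul_sum,
    sum_addChar_mul_sq hF hψ hb]

lemma sum_addChar_diagonal_quadratic (hF : ringChar F ≠ 2) (hψ : ψ ≠ 1) {ι : Type*} [Fintype ι]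
    [DecidableEq ι] {b : ι → F} (hb : ∀ j, b j ≠ 0) (m : ι → F) :
    ∑ x : ι → F, ψ (∑ j, (b j * x j ^ 2 + x j * m j))
      = ψ (-∑ j, m j ^ 2 / (4 * b j)) * η (∏ j, b j) * g ^ Fintype.card ι := by
  rw [ψ.sum_pi_map_sum_eq_prod (fun j y => b j * y ^ 2 + y * m j)]
  simp only [sum_addChar_mul_sq_add_mul hF hψ (hb _), prod_mul_distrib,
    ← ψ.map_sum_eq_prod, ← map_prod, prod_const, card_univ, sum_neg_distrib, mul_assoc]

theorem card_mul_sum_quadric_addChar (hF : ringChar F ≠ 2) (hψ : ψ ≠ 1) {ι : Type*} [Fintype ι]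
    [DecidableEq ι] (hι : Odd (Fintype.card ι)) {a : ι → F} (ha : ∀ j, a j ≠ 0) (m : ι → F) :
    (Fintype.card F : R) *
        ∑ x ∈ univ.filter (fun x : ι → F => ∑ j, a j * x j ^ 2 = 0), ψ (∑ j, x j * m j)
      = ∏ j, ∑ y, ψ (y * m j)
        + η (∏ j, a j) * η (-∑ j, m j ^ 2 / (4 * a j)) * g ^ (Fintype.card ι + 1) := by
  set e : F := -∑ j, m j ^ 2 / (4 * a j)
  have hzero : ∑ x : ι → F, ψ (0 * ∑ j, a j * x j ^ 2 + ∑ j, x j * m j)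
      = ∏ j, ∑ y, ψ (y * m j) := by
    simpa using ψ.sum_pi_map_sum_eq_prod (fun j y => y * m j)
  have hne {t : F} (ht : t ≠ 0) : ∑ x : ι → F, ψ (t * ∑ j, a j * x j ^ 2 + ∑ j, x j * m j)
      = η (∏ j, a j) * g ^ Fintype.card ι * (η t * ψ (e / t)) := by
    have hsplit (x : ι → F) : t * ∑ j, a j * x j ^ 2 + ∑ j, x j * m j
        = ∑ j, (t * a j * x j ^ 2 + x j * m j) := by
      rw [mul_sum, ← sum_add_distrib]
      exact sum_congr rfl fun j _ => by ring
    have hshift : -∑ j, m j ^ 2 / (4 * (t * a j)) = e / t := by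
      simp only [e, neg_div, sum_div]
      congr 1
      refine sum_congr rfl fun j _ => ?_
      have := ha j
      field_simp
    simp only [hsplit, sum_addChar_diagonal_quadratic hF hψ (fun j => mul_ne_zero ht (ha j)),
      hshift, prod_mul_distrib, prod_const, card_univ, map_mul, map_pow,
      quadraticCharCast_pow_odd hι]
    ring
  rw [card_mul_sum_filter_eq_zero hψ, ← sum_erase_add _ _ (mem_univ 0), hzero, add_comm,
    sum_congr rfl fun t ht => hne (ne_of_mem_erase ht), ← mul_sum,
    sum_erase _ (by rw [quadraticCharCast_zero, zero_mul]),
    sum_quadraticCharCast_mul_addChar_div hF]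
  ring

lemma norm_quadraticCharCast {t : F} (ht : t ≠ 0) : ‖quadraticCharCast F ℂ t‖ = 1 := by
  rcases quadraticChar_dichotomy ht with h | h <;> simp [quadraticCharCast_apply, h]

lemma norm_quadraticCharCast_le_one (t : F) : ‖quadraticCharCast F ℂ t‖ ≤ 1 := by
  rcases eq_or_ne t 0 with rfl | ht
  · simp [quadraticCharCast_zero]
  · exact (norm_quadraticCharCast ht).le

lemma norm_gaussSum_quadraticCharCast_sq (hF : ringChar F ≠ 2) {ψ : AddChar F ℂ} (hψ : ψ ≠ 1) :
    ‖gaussSum (quadraticCharCast F ℂ) ψ‖ ^ 2 = Fintype.card F := by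
  rw [← norm_pow, gaussSum_sq (quadraticCharCast_ne_one hF) quadraticCharCast_isQuadratic
    (AddChar.IsPrimitive.of_ne_one hψ), norm_mul,
    norm_quadraticCharCast (neg_ne_zero.mpr one_ne_zero), one_mul, Complex.norm_natCast]

theorem card_quadric (hF : ringChar F ≠ 2) {ι : Type*} [Fintype ι] [DecidableEq ι] {k : ℕ}
    (hι : Fintype.card ι = 2 * k + 1) {a : ι → F} (ha : ∀ j, a j ≠ 0) :
    #(univ.filter fun x : ι → F => ∑ j, a j * x j ^ 2 = 0) = Fintype.card F ^ (2 * k) := by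
  obtain ⟨ψ, hψ⟩ := AddChar.exists_apply_ne_zero.mpr (one_ne_zero : (1 : F) ≠ 0)
  have hψ₁ : ψ ≠ 1 := by
    rintro rfl
    exact hψ (AddChar.one_apply 1)
  have h : (Fintype.card F : ℂ) * #(univ.filter fun x : ι → F => ∑ j, a j * x j ^ 2 = 0)
      = Fintype.card F * (Fintype.card F : ℂ) ^ (2 * k) := by
    simpa [quadraticCharCast_zero, hι, ← pow_succ'] using
      card_mul_sum_quadric_addChar hF hψ₁ ⟨k, hι⟩ ha 0
  exact_mod_cast mul_left_cancel₀ (by simp) h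

theorem norm_sum_quadric_addChar_le (hF : ringChar F ≠ 2) {ψ : AddChar F ℂ} (hψ : ψ ≠ 1)
    {ι : Type*} [Fintype ι] [DecidableEq ι] {k : ℕ} (hι : Fintype.card ι = 2 * k + 1) {a : ι → F}
    (ha : ∀ j, a j ≠ 0) {m : ι → F} (hm : m ≠ 0) :
    ‖∑ x ∈ univ.filter (fun x : ι → F => ∑ j, a j * x j ^ 2 = 0), ψ (∑ j, x j * m j)‖
      ≤ (Fintype.card F : ℝ) ^ k := by
  obtain ⟨j, hj⟩ := Function.ne_iff.mp hm
  replace hj : m j ≠ 0 := hj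
  have hvanish : ∏ j, ∑ y, ψ (y * m j) = 0 := prod_eq_zero (mem_univ j) <| by
    simpa [hj] using AddChar.sum_mulShift (m j) (AddChar.IsPrimitive.of_ne_one hψ)
  have h := card_mul_sum_quadric_addChar hF hψ ⟨k, hι⟩ ha m
  set T := ∑ x ∈ univ.filter (fun x : ι → F => ∑ j, a j * x j ^ 2 = 0), ψ (∑ j, x j * m j)
  rw [hvanish, zero_add, hι, show 2 * k + 1 + 1 = 2 * (k + 1) by ring, pow_mul] at h
  have hq : (0 : ℝ) < Fintype.card F := by exact_mod_cast Fintype.card_pos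
  refine le_of_mul_le_mul_left ?_ hq
  calc (Fintype.card F : ℝ) * ‖T‖
      = ‖quadraticCharCast F ℂ (∏ j, a j)‖ * ‖quadraticCharCast F ℂ (-∑ j, m j ^ 2 / (4 * a j))‖
          * (‖gaussSum (quadraticCharCast F ℂ) ψ‖ ^ 2) ^ (k + 1) := by
        rw [← Complex.norm_natCast, ← norm_mul, h, norm_mul, norm_mul, norm_pow, norm_pow]
    _ ≤ 1 * 1 * (Fintype.card F : ℝ) ^ (k + 1) := by
        rw [norm_gaussSum_quadraticCharCast_sq hF hψ]
        gcongr <;> exact norm_quadraticCharCast_le_one _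
    _ = (Fintype.card F : ℝ) * (Fintype.card F : ℝ) ^ k := by ring

end QuadraticGaussSums

theorem statement5_general (d : ℕ) (hodd : Odd d) :
    ∃ C : ℝ, 0 < C ∧
      ∀ (F : Type) [Field F] [Fintype F], ringChar F ≠ 2 →
        ∀ (χ : AddChar F ℂ), χ ≠ 1 →
          ∀ a : Fin d → F, (∀ j, a j ≠ 0) →
            (let S : Finset (Fin d → F) :=
              Finset.univ.filter fun x => ∑ j, a j * x j ^ 2 = 0
            let σv : (Fin d → F) → ℂ :=
              fun m => (S.card : ℂ)⁻¹ * ∑ x ∈ S, χ (∑ j, x j * m j)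
            σv 0 = 1 ∧
            ∀ m : Fin d → F, m ≠ 0 →
              ‖σv m‖ ≤ C * (Fintype.card F : ℝ) ^ (-(((d : ℝ) - 1) / 2))) := by
  obtain ⟨k, rfl⟩ := hodd
  refine ⟨1, one_pos, fun F _ _ hF χ hχ a ha => ?_⟩
  intro S σv
  have hd : Fintype.card (Fin (2 * k + 1)) = 2 * k + 1 := Fintype.card_fin _
  have hS : (S.card : ℂ) = (Fintype.card F : ℂ) ^ (2 * k) := by
    exact_mod_cast card_quadric hF hd ha
  have hq : (0 : ℝ) < Fintype.card F := by exact_mod_cast Fintype.card_pos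
  refine ⟨by simp [σv, hS], fun m hm => ?_⟩
  have hexp : -((((2 * k + 1 : ℕ) : ℝ) - 1) / 2) = -(k : ℝ) := by push_cast; ring
  rw [hexp, Real.rpow_neg hq.le, Real.rpow_natCast, one_mul]
  calc ‖σv m‖ ≤ ((Fintype.card F : ℝ) ^ (2 * k))⁻¹ * (Fintype.card F : ℝ) ^ k := by
        simp only [σv, norm_mul, norm_inv, hS, norm_pow, Complex.norm_natCast]
        gcongr
        exact norm_sum_quadric_addChar_le hF hχ hd ha hm
    _ = ((Fintype.card F : ℝ) ^ k)⁻¹ := by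
        rw [two_mul, pow_add, mul_inv, inv_mul_cancel_right₀ (pow_pos hq k).ne']

/-- Fourier decay of the surface measure in odd dimensions `d ≥ 3`:
`(dσ)^∨(0) = 1` and `|(dσ)^∨(m)| ≤ C q^{−(d−1)/2}` for `m ≠ 0`, with `C`
independent of `q`. -/
theorem statement5 (d : ℕ) (hd : 3 ≤ d) (hodd : Odd d) :
    ∃ C : ℝ, 0 < C ∧
      ∀ (F : Type) [Field F] [Fintype F], ringChar F ≠ 2 →
        ∀ (χ : AddChar F ℂ), χ ≠ 1 →
          ∀ a : Fin d → F, (∀ j, a j ≠ 0) →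
            (let S : Finset (Fin d → F) :=
              Finset.univ.filter fun x => ∑ j, a j * x j ^ 2 = 0
            let σv : (Fin d → F) → ℂ :=
              fun m => (S.card : ℂ)⁻¹ * ∑ x ∈ S, χ (∑ j, x j * m j)
            σv 0 = 1 ∧
            ∀ m : Fin d → F, m ≠ 0 →
              ‖σv m‖ ≤ C * (Fintype.card F : ℝ) ^ (-(((d : ℝ) - 1) / 2))) :=
  statement5_general d hodd
end

section
/- Let d ≥ 2 be even, b_1,…,b_d ∈ F_q nonzero, and S = {m ∈ F_q^d : b_1 m_1² + ⋯ + b_d m_d² = 0}. Then there is a constant C independent of q such that for every subset E ⊂ F_q^d, ∑_{m∈S} |Ê(m)|² ≤ C · min{ q^{−(d+1)} |E|^{(d+2)/d}, q^{−d} |E| }, where Ê(m) = q^{−d} ∑_{x∈F_q^d} χ(−x·m) 1_E(x). -/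
/-!
Write `Q m = ∑ b_j m_j²` and `P = ∑_{m ∈ S} |∑_{x ∈ E} χ(-x·m)|²`. Expanding the square,
`P ≤ ∑_{x, y ∈ E} |K(y - x)|` with `K(t) = ∑_{m ∈ S} χ(t·m)`. Detecting `Q m = 0` by an extra
average over `s ∈ F`, `q K(t) = ∑_s ∑_m χ(s Q m + t·m)`; for `s ≠ 0` the inner sum is a
nondegenerate quadratic Gauss sum of modulus `q^(d/2)`, and for `s = 0` it vanishes unless `t = 0`.
Hence `q P ≤ q^(d/2+1) |E|² + q^d |E|`, while Plancherel gives `P ≤ q^d |E|`. Comparing `|E|`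
with `q^(d/2)` decides which of the two bounds gives the minimum, with constant `C = 2`.
-/

open Finset
open scoped Classical

lemma mul_sum_sum_norm_sub_le {V : Type*} [AddGroup V] [DecidableEq V] (K : V → ℂ) {c α β : ℝ}
    (hK : ∀ t, c * ‖K t‖ ≤ α + if t = 0 then β else 0) (E : Finset V) :
    c * ∑ x ∈ E, ∑ y ∈ E, ‖K (y - x)‖ ≤ (#E : ℝ) ^ 2 * α + #E * β := by
  calc c * ∑ x ∈ E, ∑ y ∈ E, ‖K (y - x)‖
      ≤ ∑ x ∈ E, ∑ y ∈ E, (α + if y = x then β else 0) := by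
        simp_rw [mul_sum]
        exact sum_le_sum fun x _ => sum_le_sum fun y _ => by simpa [sub_eq_zero] using hK (y - x)
    _ = _ := by simp [sum_add_distrib, sum_ite_eq']; ring

section CharacterSums

variable {F ι : Type*} [Field F] [Fintype F] [Fintype ι] {χ : AddChar F ℂ}

lemma sum_norm_sq_fourier_le (E M : Finset (ι → F)) :
    ∑ m ∈ M, ‖∑ x ∈ E, χ (-(x ⬝ᵥ m))‖ ^ 2 ≤ ∑ x ∈ E, ∑ y ∈ E, ‖∑ m ∈ M, χ ((y - x) ⬝ᵥ m)‖ := by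
  have hexpand : ∀ m, (‖∑ x ∈ E, χ (-(x ⬝ᵥ m))‖ ^ 2 : ℂ) =
      ∑ x ∈ E, ∑ y ∈ E, χ ((y - x) ⬝ᵥ m) := fun m => by
    rw [← Complex.mul_conj', map_sum, sum_mul_sum]
    refine sum_congr rfl fun x _ => sum_congr rfl fun y _ => ?_
    rw [← AddChar.map_neg_eq_conj, ← AddChar.map_add_eq_mul, sub_dotProduct, neg_neg,
      neg_add_eq_sub]
  calc ∑ m ∈ M, ‖∑ x ∈ E, χ (-(x ⬝ᵥ m))‖ ^ 2
      = (∑ m ∈ M, (‖∑ x ∈ E, χ (-(x ⬝ᵥ m))‖ ^ 2 : ℂ)).re := by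
        simp [Complex.re_sum, ← Complex.ofReal_pow]
    _ = (∑ x ∈ E, ∑ y ∈ E, ∑ m ∈ M, χ ((y - x) ⬝ᵥ m)).re := by
        simp_rw [hexpand]; rw [sum_comm]; exact congrArg _ (sum_congr rfl fun _ _ => sum_comm)
    _ ≤ ‖∑ x ∈ E, ∑ y ∈ E, ∑ m ∈ M, χ ((y - x) ⬝ᵥ m)‖ := Complex.re_le_norm _
    _ ≤ _ := (norm_sum_le _ _).trans (sum_le_sum fun x _ => norm_sum_le _ _)

variable [DecidableEq ι]

lemma sum_addChar_dotProduct (hχ : χ ≠ 1) (c : ι → F) :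
    ∑ n : ι → F, χ (c ⬝ᵥ n) = if c = 0 then (Fintype.card F : ℂ) ^ Fintype.card ι else 0 := by
  split_ifs with hc
  · simp [hc]
  obtain ⟨j, hj⟩ := Function.ne_iff.1 hc
  obtain ⟨x, hx⟩ := AddChar.ne_one_iff.1 hχ
  have hψ : χ.compAddMonoidHom (AddMonoidHom.mk' (c ⬝ᵥ ·) (dotProduct_add c)) ≠ 1 :=
    AddChar.ne_one_iff.2 ⟨Pi.single j ((c j)⁻¹ * x), by
      simpa [dotProduct_single, mul_inv_cancel_left₀ hj] using hx⟩
  exact AddChar.sum_eq_zero_of_ne_one hψ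

lemma norm_sq_sum_addChar_quadratic (hF : ringChar F ≠ 2) (hχ : χ ≠ 1) {b : ι → F}
    (hb : ∀ j, b j ≠ 0) {s : F} (hs : s ≠ 0) (t : ι → F) :
    ‖∑ m : ι → F, χ (s * ∑ j, b j * m j ^ 2 + t ⬝ᵥ m)‖ ^ 2 =
      (Fintype.card F : ℝ) ^ Fintype.card ι := by
  set A : (ι → F) → F := fun m => s * ∑ j, b j * m j ^ 2 + t ⬝ᵥ m
  let c : (ι → F) → ι → F := fun w j => 2 * s * b j * w j
  -- `A (n + w) - A n` is affine in `n`, so summing over `n` kills every shift `w ≠ 0`.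
  have hA : ∀ n w, A (n + w) - A n = A w + c w ⬝ᵥ n := fun n w => by
    simp only [A, c, dotProduct, Pi.add_apply, mul_sum, ← sum_add_distrib, ← sum_sub_distrib]
    exact sum_congr rfl fun j _ => by ring
  have hc : ∀ w, c w = 0 ↔ w = 0 := fun w => by
    simp [c, funext_iff, hs, hb, Ring.two_ne_zero hF]
  have key : (∑ m, χ (A m)) * starRingEnd ℂ (∑ m, χ (A m)) =
      (Fintype.card F : ℂ) ^ Fintype.card ι := calc
    _ = ∑ n, ∑ w, χ (A (n + w) - A n) := by
        rw [map_sum, sum_mul_sum, sum_comm]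
        refine sum_congr rfl fun n _ => ?_
        rw [← Fintype.sum_equiv (Equiv.addLeft n) _ _ fun _ => rfl]
        simp [← AddChar.map_neg_eq_conj, ← AddChar.map_add_eq_mul, sub_eq_add_neg]
    _ = ∑ w, χ (A w) * ∑ n, χ (c w ⬝ᵥ n) := by
        rw [sum_comm]
        simp only [hA, AddChar.map_add_eq_mul, mul_sum]
    _ = (Fintype.card F : ℂ) ^ Fintype.card ι := by
        simp [sum_addChar_dotProduct hχ, hc, A]
  exact_mod_cast (Complex.mul_conj' _).symm.trans key

lemma card_mul_sum_addChar_quadric (hχ : χ ≠ 1) (b t : ι → F) :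
    (Fintype.card F : ℂ) * ∑ m ∈ univ.filter (fun m : ι → F => ∑ j, b j * m j ^ 2 = 0),
        χ (t ⬝ᵥ m) =
      ∑ s : F, ∑ m : ι → F, χ (s * ∑ j, b j * m j ^ 2 + t ⬝ᵥ m) := by
  rw [sum_comm, sum_filter, mul_sum]
  refine sum_congr rfl fun m _ => ?_
  simp only [AddChar.map_add_eq_mul, ← sum_mul]
  rw [AddChar.sum_mulShift _ (AddChar.IsPrimitive.of_ne_one hχ)]
  split_ifs <;> simp

lemma card_mul_norm_sum_addChar_quadric_le {e : ℕ} (hι : Fintype.card ι = e + e)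
    (hF : ringChar F ≠ 2) (hχ : χ ≠ 1) {b : ι → F} (hb : ∀ j, b j ≠ 0) (t : ι → F) :
    (Fintype.card F : ℝ) *
        ‖∑ m ∈ univ.filter (fun m : ι → F => ∑ j, b j * m j ^ 2 = 0), χ (t ⬝ᵥ m)‖ ≤
      (Fintype.card F : ℝ) ^ (e + 1) + if t = 0 then (Fintype.card F : ℝ) ^ (e + e) else 0 := by
  set q := (Fintype.card F : ℝ)
  have hterm : ∀ s : F, ‖∑ m : ι → F, χ (s * ∑ j, b j * m j ^ 2 + t ⬝ᵥ m)‖ ≤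
      q ^ e + if s = 0 then (if t = 0 then q ^ (e + e) else 0) else 0 := fun s => by
    by_cases hs : s = 0
    · simp only [hs, zero_mul, zero_add, if_true, sum_addChar_dotProduct hχ, hι]
      split_ifs <;> simp [q]
    · rw [if_neg hs, add_zero]
      rw [← pow_le_pow_iff_left₀ (norm_nonneg _) (by positivity) two_ne_zero,
        norm_sq_sum_addChar_quadratic hF hχ hb hs, hι, ← pow_mul, mul_two]
  calc q * ‖_‖ = ‖∑ s : F, ∑ m : ι → F, χ (s * ∑ j, b j * m j ^ 2 + t ⬝ᵥ m)‖ := by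
        rw [← card_mul_sum_addChar_quadric hχ, norm_mul, Complex.norm_natCast]
    _ ≤ ∑ s : F, (q ^ e + if s = 0 then (if t = 0 then q ^ (e + e) else 0) else 0) :=
        (norm_sum_le _ _).trans (sum_le_sum fun s _ => hterm s)
    _ = _ := by simp [sum_add_distrib, q, pow_succ, mul_comm]

lemma sum_norm_sq_fourier_le_card_pow_mul_card (hχ : χ ≠ 1) (E M : Finset (ι → F)) :
    ∑ m ∈ M, ‖∑ x ∈ E, χ (-(x ⬝ᵥ m))‖ ^ 2 ≤ (Fintype.card F : ℝ) ^ Fintype.card ι * #E := by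
  have hK : ∀ t : ι → F, 1 * ‖∑ m, χ (t ⬝ᵥ m)‖ ≤
      0 + if t = 0 then (Fintype.card F : ℝ) ^ Fintype.card ι else 0 := fun t => by
    rw [sum_addChar_dotProduct hχ]; split_ifs <;> simp
  calc ∑ m ∈ M, ‖∑ x ∈ E, χ (-(x ⬝ᵥ m))‖ ^ 2
      ≤ ∑ m, ‖∑ x ∈ E, χ (-(x ⬝ᵥ m))‖ ^ 2 :=
        sum_le_sum_of_subset_of_nonneg (subset_univ M) fun _ _ _ => by positivity
    _ ≤ 1 * ∑ x ∈ E, ∑ y ∈ E, ‖∑ m, χ ((y - x) ⬝ᵥ m)‖ := by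
        rw [one_mul]; exact sum_norm_sq_fourier_le E univ
    _ ≤ (#E : ℝ) ^ 2 * 0 + #E * (Fintype.card F : ℝ) ^ Fintype.card ι :=
        mul_sum_sum_norm_sub_le (fun t => ∑ m, χ (t ⬝ᵥ m)) hK E
    _ = _ := by ring

lemma card_mul_sum_norm_sq_fourier_quadric_le {e : ℕ} (hι : Fintype.card ι = e + e)
    (hF : ringChar F ≠ 2) (hχ : χ ≠ 1) {b : ι → F} (hb : ∀ j, b j ≠ 0) (E : Finset (ι → F)) :
    (Fintype.card F : ℝ) * ∑ m ∈ univ.filter (fun m : ι → F => ∑ j, b j * m j ^ 2 = 0),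
        ‖∑ x ∈ E, χ (-(x ⬝ᵥ m))‖ ^ 2 ≤
      (#E : ℝ) ^ 2 * (Fintype.card F : ℝ) ^ (e + 1) + #E * (Fintype.card F : ℝ) ^ (e + e) :=
  (mul_le_mul_of_nonneg_left (sum_norm_sq_fourier_le E _) (by positivity)).trans
    (mul_sum_sum_norm_sub_le (fun t => ∑ m ∈ univ.filter (fun m : ι → F => ∑ j, b j * m j ^ 2 = 0),
      χ (t ⬝ᵥ m)) (card_mul_norm_sum_addChar_quadric_le hι hF hχ hb) E)

end CharacterSums

lemma rpow_add_two_div_eq {N : ℝ} (hN : 0 ≤ N) {e : ℕ} (he : e ≠ 0) :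
    N ^ ((((e + e : ℕ) : ℝ) + 2) / ((e + e : ℕ) : ℝ)) =
      (N ^ (e⁻¹ : ℝ)) ^ e * N ^ (e⁻¹ : ℝ) := by
  have hexp : (((e + e : ℕ) : ℝ) + 2) / ((e + e : ℕ) : ℝ) = 1 + (e⁻¹ : ℝ) := by
    push_cast; field_simp; ring
  rw [hexp, Real.rpow_add' hN (by positivity), Real.rpow_one,
    Real.rpow_inv_natCast_pow hN he]

/-- Here `u = |E| ^ (1 / e)`: for `u ≤ q` the Gauss-sum bound `hqP` gives the first term of the
minimum, and for `q ≤ u` the first term dominates the second, which `hP` gives. -/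
lemma inv_sq_mul_le_two_mul_min {q u P : ℝ} {e : ℕ} (he : e ≠ 0) (hq : 0 < q) (hu : 1 ≤ u)
    (hP : P ≤ q ^ (e + e) * u ^ e)
    (hqP : q * P ≤ (u ^ e) ^ 2 * q ^ (e + 1) + u ^ e * q ^ (e + e)) :
    ((q ^ (e + e))⁻¹) ^ 2 * P ≤
      2 * min ((q ^ (e + e + 1))⁻¹ * (u ^ e * u)) ((q ^ (e + e))⁻¹ * u ^ e) := by
  have hQ : 0 < q ^ (e + e) := by positivity
  have hB : ((q ^ (e + e))⁻¹) ^ 2 * P ≤ (q ^ (e + e))⁻¹ * u ^ e := by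
    rw [sq, mul_assoc]
    gcongr
    rwa [inv_mul_le_iff₀ hQ]
  have hA : ((q ^ (e + e))⁻¹) ^ 2 * P ≤ 2 * ((q ^ (e + e + 1))⁻¹ * (u ^ e * u)) := by
    rcases le_total u q with huq | hqu
    · have hgrowth : u ^ e * q ≤ q ^ e * u := by
        obtain ⟨k, rfl⟩ := Nat.exists_eq_succ_of_ne_zero he
        rw [pow_succ, pow_succ, mul_right_comm, mul_assoc, mul_assoc, mul_comm q u]
        gcongr
      have hqP' : q * P ≤ 2 * (q ^ (e + e) * (u ^ e * u)) := calc
        q * P ≤ (u ^ e) ^ 2 * q ^ (e + 1) + u ^ e * q ^ (e + e) := hqP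
        _ = u ^ e * q ^ e * (u ^ e * q) + q ^ (e + e) * u ^ e := by ring
        _ ≤ u ^ e * q ^ e * (q ^ e * u) + q ^ (e + e) * (u ^ e * u) := by
          gcongr; exact le_mul_of_one_le_right (by positivity) hu
        _ = 2 * (q ^ (e + e) * (u ^ e * u)) := by ring
      calc ((q ^ (e + e))⁻¹) ^ 2 * P = (q ^ (e + e + 1))⁻¹ * (q ^ (e + e))⁻¹ * (q * P) := by
            field_simp; ring
        _ ≤ (q ^ (e + e + 1))⁻¹ * (q ^ (e + e))⁻¹ * (2 * (q ^ (e + e) * (u ^ e * u))) := by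
            gcongr
        _ = 2 * ((q ^ (e + e + 1))⁻¹ * (u ^ e * u)) := by field_simp
    · have hBA : (q ^ (e + e))⁻¹ * u ^ e ≤ (q ^ (e + e + 1))⁻¹ * (u ^ e * u) := calc
        (q ^ (e + e))⁻¹ * u ^ e = (q ^ (e + e + 1))⁻¹ * (u ^ e * q) := by
          rw [pow_succ]; field_simp
        _ ≤ (q ^ (e + e + 1))⁻¹ * (u ^ e * u) := by gcongr
      linarith [mul_nonneg (inv_nonneg.2 hQ.le) (pow_nonneg (zero_le_one.trans hu) e)]
  rw [mul_min_of_nonneg _ _ zero_le_two]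
  exact le_min hA (hB.trans (le_mul_of_one_le_left (by positivity) one_le_two))

/-- restriction estimate for indicator functions. For even `d ≥ 2` and
`S = {b₁m₁² + ⋯ + b_d m_d² = 0}`, for every `E ⊆ F_q^d`,
`∑_{m∈S} |Ê(m)|² ≤ C min{q^{−(d+1)}|E|^{(d+2)/d}, q^{−d}|E|}` with `C` independent of `q`. -/
theorem statement10 (d : ℕ) (hd : 2 ≤ d) (heven : Even d) :
    ∃ C : ℝ, 0 < C ∧
      ∀ (F : Type) [Field F] [Fintype F], ringChar F ≠ 2 →
        ∀ (χ : AddChar F ℂ), χ ≠ 1 →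
          ∀ b : Fin d → F, (∀ j, b j ≠ 0) →
            ∀ E : Finset (Fin d → F),
              (∑ m ∈ Finset.univ.filter fun m : Fin d → F => ∑ j, b j * m j ^ 2 = 0,
                  ‖((Fintype.card F : ℂ) ^ d)⁻¹ * ∑ x ∈ E, χ (-(∑ j, x j * m j))‖ ^ (2 : ℝ)) ≤
                C * min
                  (((Fintype.card F : ℝ) ^ (d + 1))⁻¹ *
                    (E.card : ℝ) ^ (((d : ℝ) + 2) / (d : ℝ)))
                  (((Fintype.card F : ℝ) ^ d)⁻¹ * (E.card : ℝ)) := by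
  obtain ⟨e, rfl⟩ := heven
  have he : e ≠ 0 := by omega
  refine ⟨2, two_pos, fun F _ _ hF χ hχ b hb E => ?_⟩
  have hι : Fintype.card (Fin (e + e)) = e + e := Fintype.card_fin _
  simp_rw [Real.rpow_two, norm_mul, mul_pow, ← mul_sum, norm_inv, norm_pow, Complex.norm_natCast]
  obtain rfl | hE := E.eq_empty_or_nonempty
  · calc _ = (0 : ℝ) := by simp
      _ ≤ _ := by positivity
  have hN : (1 : ℝ) ≤ #E := by exact_mod_cast hE.card_pos
  rw [rpow_add_two_div_eq (Nat.cast_nonneg _) he]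
  set u := (#E : ℝ) ^ ((e : ℝ)⁻¹)
  have hu : 1 ≤ u := Real.one_le_rpow hN (by positivity)
  have hNu : (#E : ℝ) = u ^ e := (Real.rpow_inv_natCast_pow (by positivity) he).symm
  have hP := sum_norm_sq_fourier_le_card_pow_mul_card hχ E
    (univ.filter fun m : Fin (e + e) → F => ∑ j, b j * m j ^ 2 = 0)
  have hqP := card_mul_sum_norm_sq_fourier_quadric_le hι hF hχ hb E
  rw [hι, hNu] at hP
  rw [hNu] at hqP ⊢
  exact inv_sq_mul_le_two_mul_min he (by positivity) hu hP hqP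
end

section
/- Suppose S ⊂ F_q^d with normalized surface measure dσ satisfies the restricted strong-type bound ‖1_E ∗ dσ‖_{L^r(dx)} ≤ C ‖1_E‖_{L^p(dx)} for every subset E ⊂ F_q^d, with C independent of E. Then for every function f : F_q^d → ℂ, ‖f ∗ dσ‖_{L^r(dx)} ≤ C' (log q) ‖f‖_{L^p(dx)} for a constant C' depending only on C, d, p. -/
/-!
Normalize `‖f‖_{L^p} = t`. Then `|f| ≤ |G|^{1/p} t ≤ 2^J t` with `J ≈ log₂ |G| = d log₂ q`, so
`f` splits into the part where `|f| ≤ t` and `J` dyadic layers where `2^j t < |f| ≤ 2^{j+1} t`.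
Averaging over `S` maps the first part to a function bounded by `t`. A layer is dominated by
`2^{j+1} t · 1_{E_j}` with `E_j = {|f| > 2^j t}`, so the restricted bound and Chebyshev's
inequality `2^j t ‖1_{E_j}‖_p ≤ t` bound its image by `2 C t`. Minkowski's inequality in `L^r`
sums these to `(1 + 2 C J) t`.
-/

open Finset BigOperators
open scoped Classical

section NormTrunc

variable {X E : Type*} [SeminormedAddCommGroup E]

noncomputable def normTrunc (f : X → E) (a : ℝ) : X → E := fun x => if ‖f x‖ ≤ a then f x else 0

lemma normTrunc_of_forall_norm_le {f : X → E} {a : ℝ} (hf : ∀ x, ‖f x‖ ≤ a) :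
    normTrunc f a = f :=
  funext fun x => if_pos (hf x)

lemma norm_normTrunc_le {a : ℝ} (ha : 0 ≤ a) (f : X → E) (x : X) : ‖normTrunc f a x‖ ≤ a := by
  unfold normTrunc
  split_ifs with hx
  · exact hx
  · simpa using ha

lemma norm_normTrunc_sub_normTrunc_le {a b : ℝ} (hb : 0 ≤ b) (hab : a ≤ b) (f : X → E) (x : X) :
    ‖(normTrunc f b - normTrunc f a) x‖ ≤ if a < ‖f x‖ then b else 0 := by
  simp only [normTrunc, Pi.sub_apply]
  split_ifs <;> simp only [sub_self, sub_zero, norm_zero, norm_neg, zero_sub, le_refl] <;> linarith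

lemma eq_normTrunc_add_sum_sub {f : X → E} {t : ℝ} {J : ℕ} (hf : ∀ x, ‖f x‖ ≤ 2 ^ J * t) :
    f = normTrunc f t +
      ∑ j ∈ Finset.range J, (normTrunc f (2 ^ (j + 1) * t) - normTrunc f (2 ^ j * t)) := by
  rw [Finset.sum_range_sub (fun j => normTrunc f (2 ^ j * t)), normTrunc_of_forall_norm_le hf]
  simp

end NormTrunc

section AvgLpNorm

variable {X E E' : Type*} [Fintype X] [SeminormedAddCommGroup E] [SeminormedAddCommGroup E']

noncomputable def avgLpNorm (p : ℝ) (f : X → E) : ℝ :=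
  ((Fintype.card X : ℝ)⁻¹ * ∑ x, ‖f x‖ ^ p) ^ (1 / p)

lemma avgLpNorm_nonneg (p : ℝ) (f : X → E) : 0 ≤ avgLpNorm p f := by
  unfold avgLpNorm; positivity

lemma avgLpNorm_eq_mul {p : ℝ} (f : X → E) :
    avgLpNorm p f = (Fintype.card X : ℝ)⁻¹ ^ (1 / p) * (∑ x, ‖f x‖ ^ p) ^ (1 / p) :=
  Real.mul_rpow (by positivity) (by positivity)

lemma avgLpNorm_zero {p : ℝ} (hp : p ≠ 0) : avgLpNorm p (0 : X → E) = 0 := by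
  simp [avgLpNorm, Real.zero_rpow hp, Real.zero_rpow (inv_ne_zero hp)]

lemma avgLpNorm_const [Nonempty X] {p : ℝ} (hp : p ≠ 0) (a : E) :
    avgLpNorm p (fun _ : X => a) = ‖a‖ := by
  rw [avgLpNorm, Finset.sum_const, Finset.card_univ, nsmul_eq_mul, inv_mul_cancel_left₀
    (by positivity), one_div, Real.rpow_rpow_inv (norm_nonneg a) hp]

lemma avgLpNorm_mono {p : ℝ} (hp : 0 < p) {f : X → E} {g : X → E'} (h : ∀ x, ‖f x‖ ≤ ‖g x‖) :
    avgLpNorm p f ≤ avgLpNorm p g := by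
  unfold avgLpNorm
  gcongr with x
  exact h x

lemma avgLpNorm_smul {𝕜 : Type*} [NormedField 𝕜] [NormedSpace 𝕜 E] {p : ℝ} (hp : 0 < p)
    (a : 𝕜) (f : X → E) : avgLpNorm p (a • f) = ‖a‖ * avgLpNorm p f := by
  simp only [avgLpNorm, Pi.smul_apply, norm_smul, Real.mul_rpow (norm_nonneg a) (norm_nonneg _),
    ← Finset.mul_sum, mul_left_comm _ (‖a‖ ^ p)]
  rw [Real.mul_rpow (by positivity) (by positivity), one_div,
    Real.rpow_rpow_inv (norm_nonneg a) hp.ne']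

lemma avgLpNorm_add_le {p : ℝ} (hp : 1 ≤ p) (f g : X → E) :
    avgLpNorm p (f + g) ≤ avgLpNorm p f + avgLpNorm p g := by
  have hp0 : 0 < p := zero_lt_one.trans_le hp
  simp only [avgLpNorm_eq_mul, ← mul_add]
  gcongr
  calc (∑ x, ‖(f + g) x‖ ^ p) ^ (1 / p) ≤ (∑ x, (‖f x‖ + ‖g x‖) ^ p) ^ (1 / p) := by
        gcongr with x
        exact norm_add_le _ _
    _ ≤ _ := Real.Lp_add_le_of_nonneg _ hp (fun x _ => norm_nonneg _) fun x _ => norm_nonneg _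

lemma avgLpNorm_sum_le {ι : Type*} {p : ℝ} (hp : 1 ≤ p) (s : Finset ι) (f : ι → X → E) :
    avgLpNorm p (∑ i ∈ s, f i) ≤ ∑ i ∈ s, avgLpNorm p (f i) :=
  Finset.le_sum_of_subadditive _ (avgLpNorm_zero (by linarith)).le (avgLpNorm_add_le hp) s f

lemma norm_le_card_rpow_mul_avgLpNorm {p : ℝ} (hp : 0 < p) (f : X → E) (x : X) :
    ‖f x‖ ≤ (Fintype.card X : ℝ) ^ (1 / p) * avgLpNorm p f := by
  have : Nonempty X := ⟨x⟩
  rw [avgLpNorm_eq_mul, ← mul_assoc, ← Real.mul_rpow (by positivity) (by positivity),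
    mul_inv_cancel₀ (by positivity), Real.one_rpow, one_mul]
  calc ‖f x‖ = (‖f x‖ ^ p) ^ (1 / p) := by
        rw [one_div, Real.rpow_rpow_inv (norm_nonneg _) hp.ne']
    _ ≤ (∑ x, ‖f x‖ ^ p) ^ (1 / p) := by
        gcongr
        exact Finset.single_le_sum (f := fun x => ‖f x‖ ^ p) (fun _ _ => by positivity)
          (Finset.mem_univ x)

lemma mul_avgLpNorm_indicator_le [DecidableEq X] {p : ℝ} (hp : 0 < p) {f : X → E} {a : ℝ}
    (ha : 0 ≤ a) {A : Finset X} (hf : ∀ x ∈ A, a ≤ ‖f x‖) :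
    a * avgLpNorm p (fun x => if x ∈ A then (1 : ℂ) else 0) ≤ avgLpNorm p f := by
  rw [← Complex.norm_of_nonneg ha, ← avgLpNorm_smul hp]
  refine avgLpNorm_mono hp fun x => ?_
  by_cases hx : x ∈ A <;> simp [hx, abs_of_nonneg ha, hf x]

end AvgLpNorm

lemma natCast_clog_two_mul_log_two_le (n : ℕ) :
    (Nat.clog 2 n : ℝ) * Real.log 2 ≤ Real.log n + Real.log 2 := by
  have hlog2 : 0 < Real.log 2 := Real.log_pos one_lt_two
  have hclog : (Nat.clog 2 n : ℝ) ≤ Real.logb 2 n + 1 := by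
    have h := Real.natCeil_logb_natCast 2 n
    push_cast at h
    rw [← h]
    exact (Nat.ceil_lt_add_one (div_nonneg (Real.log_natCast_nonneg n) hlog2.le)).le
  calc (Nat.clog 2 n : ℝ) * Real.log 2 ≤ (Real.logb 2 n + 1) * Real.log 2 := by gcongr
    _ = Real.log n + Real.log 2 := by rw [Real.logb, add_mul, div_mul_cancel₀ _ hlog2.ne', one_mul]

section Convolution

variable {G : Type*} [AddGroup G]

/-- `convAvg S f` is `f ∗ dσ` for the normalized counting measure `dσ` on `S`. -/
noncomputable def convAvg (S : Finset G) : (G → ℂ) →ₗ[ℂ] G → ℂ where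
  toFun f x := (S.card : ℂ)⁻¹ * ∑ y ∈ S, f (x - y)
  map_add' f g := by ext x; simp [Finset.sum_add_distrib, mul_add]
  map_smul' a f := by ext x; simp [Finset.mul_sum, mul_left_comm]

lemma convAvg_apply (S : Finset G) (f : G → ℂ) (x : G) :
    convAvg S f x = (S.card : ℂ)⁻¹ * ∑ y ∈ S, f (x - y) :=
  rfl

lemma norm_convAvg_le_of_norm_le {S : Finset G} {f : G → ℂ} {u : G → ℝ} (hf : ∀ z, ‖f z‖ ≤ u z)
    (x : G) : ‖convAvg S f x‖ ≤ ‖convAvg S (fun z => (u z : ℂ)) x‖ := by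
  have hu : ∀ z, 0 ≤ u z := fun z => (norm_nonneg _).trans (hf z)
  have hreal : convAvg S (fun z => (u z : ℂ)) x = ((S.card : ℝ)⁻¹ * ∑ y ∈ S, u (x - y) : ℝ) := by
    simp [convAvg_apply]
  rw [hreal, Complex.norm_of_nonneg (mul_nonneg (by positivity) (sum_nonneg fun y _ => hu _)),
    convAvg_apply, norm_mul, norm_inv, Complex.norm_natCast]
  gcongr
  exact (norm_sum_le _ _).trans (Finset.sum_le_sum fun y _ => hf _)

variable [Fintype G] {S : Finset G} {r : ℝ}

lemma avgLpNorm_convAvg_le_of_norm_le (hS : S.Nonempty) (hr : 0 < r) {f : G → ℂ} {M : ℝ}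
    (hf : ∀ z, ‖f z‖ ≤ M) : avgLpNorm r (convAvg S f) ≤ M := by
  obtain ⟨y, -⟩ := id hS
  have hM : 0 ≤ M := (norm_nonneg _).trans (hf y)
  have hconst : convAvg S (fun _ => (M : ℂ)) = fun _ => (M : ℂ) := by
    ext x
    simp [convAvg_apply, hS.card_pos.ne']
  calc avgLpNorm r (convAvg S f) ≤ avgLpNorm r (convAvg S fun _ => (M : ℂ)) :=
        avgLpNorm_mono hr (norm_convAvg_le_of_norm_le hf)
    _ = M := by rw [hconst, avgLpNorm_const hr.ne', Complex.norm_of_nonneg hM]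

lemma avgLpNorm_convAvg_le_mul_of_norm_le_indicator [DecidableEq G] (hr : 0 < r) {f : G → ℂ}
    {A : Finset G} {M : ℝ} (hM : 0 ≤ M) (hf : ∀ z, ‖f z‖ ≤ if z ∈ A then M else 0) :
    avgLpNorm r (convAvg S f) ≤
      M * avgLpNorm r (convAvg S fun z => if z ∈ A then (1 : ℂ) else 0) := by
  have hu : (fun z => ((if z ∈ A then M else 0 : ℝ) : ℂ)) =
      (M : ℂ) • fun z => if z ∈ A then (1 : ℂ) else 0 := by
    ext z; by_cases hz : z ∈ A <;> simp [hz]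
  calc avgLpNorm r (convAvg S f)
      ≤ avgLpNorm r (convAvg S fun z => ((if z ∈ A then M else 0 : ℝ) : ℂ)) :=
        avgLpNorm_mono hr (norm_convAvg_le_of_norm_le hf)
    _ = M * avgLpNorm r (convAvg S fun z => if z ∈ A then (1 : ℂ) else 0) := by
        rw [hu, map_smul, avgLpNorm_smul hr, Complex.norm_of_nonneg hM]

variable [DecidableEq G] {p C : ℝ}

lemma avgLpNorm_convAvg_normTrunc_layer_le (hp : 0 < p) (hr : 0 < r) (hC : 0 ≤ C)
    (hres : ∀ A : Finset G, avgLpNorm r (convAvg S fun z => if z ∈ A then (1 : ℂ) else 0) ≤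
      C * avgLpNorm p fun z => if z ∈ A then (1 : ℂ) else 0)
    (f : G → ℂ) {a : ℝ} (ha : 0 ≤ a) :
    avgLpNorm r (convAvg S (normTrunc f (2 * a) - normTrunc f a)) ≤ 2 * C * avgLpNorm p f := by
  set A := Finset.univ.filter fun z => a < ‖f z‖
  calc avgLpNorm r (convAvg S (normTrunc f (2 * a) - normTrunc f a))
      ≤ 2 * a * avgLpNorm r (convAvg S fun z => if z ∈ A then (1 : ℂ) else 0) :=
        avgLpNorm_convAvg_le_mul_of_norm_le_indicator hr (by positivity) fun z => by
          simpa [A] using norm_normTrunc_sub_normTrunc_le (by positivity) (by linarith) f z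
    _ ≤ 2 * a * (C * avgLpNorm p fun z => if z ∈ A then (1 : ℂ) else 0) := by
        gcongr
        exact hres A
    _ = 2 * C * (a * avgLpNorm p fun z => if z ∈ A then (1 : ℂ) else 0) := by ring
    _ ≤ 2 * C * avgLpNorm p f := by
        gcongr
        exact mul_avgLpNorm_indicator_le hp ha fun z hz => (Finset.mem_filter.1 hz).2.le

theorem avgLpNorm_convAvg_le_of_restricted (hS : S.Nonempty) (hp : 0 < p) (hr : 1 ≤ r)
    (hC : 0 ≤ C)
    (hres : ∀ A : Finset G, avgLpNorm r (convAvg S fun z => if z ∈ A then (1 : ℂ) else 0) ≤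
      C * avgLpNorm p fun z => if z ∈ A then (1 : ℂ) else 0)
    {J : ℕ} (hJ : (Fintype.card G : ℝ) ^ (1 / p) ≤ 2 ^ J) (f : G → ℂ) :
    avgLpNorm r (convAvg S f) ≤ (1 + 2 * C * J) * avgLpNorm p f := by
  have hr0 : 0 < r := zero_lt_one.trans_le hr
  set t := avgLpNorm p f
  have ht : 0 ≤ t := avgLpNorm_nonneg p f
  have hf : ∀ z, ‖f z‖ ≤ 2 ^ J * t := fun z =>
    (norm_le_card_rpow_mul_avgLpNorm hp f z).trans (by gcongr)
  set layer := fun j : ℕ => normTrunc f (2 ^ (j + 1) * t) - normTrunc f (2 ^ j * t)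
  have hlayer : ∀ j, avgLpNorm r (convAvg S (layer j)) ≤ 2 * C * t := fun j => by
    have h2 : (2 : ℝ) ^ (j + 1) * t = 2 * (2 ^ j * t) := by ring
    simp only [layer, h2]
    exact avgLpNorm_convAvg_normTrunc_layer_le hp hr0 hC hres f (by positivity)
  calc avgLpNorm r (convAvg S f)
      = avgLpNorm r (convAvg S (normTrunc f t) + ∑ j ∈ Finset.range J, convAvg S (layer j)) := by
        rw [← map_sum, ← map_add, ← eq_normTrunc_add_sum_sub hf]
    _ ≤ avgLpNorm r (convAvg S (normTrunc f t)) +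
          ∑ j ∈ Finset.range J, avgLpNorm r (convAvg S (layer j)) :=
        (avgLpNorm_add_le hr _ _).trans (add_le_add_right (avgLpNorm_sum_le hr _ _) _)
    _ ≤ t + ∑ j ∈ Finset.range J, 2 * C * t :=
        add_le_add (avgLpNorm_convAvg_le_of_norm_le hS hr0 (norm_normTrunc_le ht f))
          (Finset.sum_le_sum fun j _ => hlayer j)
    _ = (1 + 2 * C * J) * t := by
        rw [Finset.sum_const, Finset.card_range, nsmul_eq_mul]
        ring

theorem avgLpNorm_convAvg_le_clog_mul (hS : S.Nonempty) (hp : 1 ≤ p) (hr : 1 ≤ r) (hC : 0 ≤ C)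
    (hres : ∀ A : Finset G, avgLpNorm r (convAvg S fun z => if z ∈ A then (1 : ℂ) else 0) ≤
      C * avgLpNorm p fun z => if z ∈ A then (1 : ℂ) else 0)
    (f : G → ℂ) :
    avgLpNorm r (convAvg S f) ≤ (1 + 2 * C * Nat.clog 2 (Fintype.card G)) * avgLpNorm p f := by
  have hcard : (1 : ℝ) ≤ Fintype.card G := Nat.one_le_cast.2 (card_pos.2 (hS.mono (subset_univ S)))
  refine avgLpNorm_convAvg_le_of_restricted hS (by linarith) hr hC hres ?_ f
  calc (Fintype.card G : ℝ) ^ (1 / p) ≤ (Fintype.card G : ℝ) ^ (1 : ℝ) :=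
        Real.rpow_le_rpow_of_exponent_le hcard ((div_le_one (by linarith)).2 hp)
    _ ≤ 2 ^ Nat.clog 2 (Fintype.card G) := by
        rw [Real.rpow_one]
        exact_mod_cast Nat.le_pow_clog one_lt_two _

end Convolution

/-- from restricted strong-type to strong type with a `log q` loss.
If `‖1_E ∗ dσ‖_{L^r} ≤ C‖1_E‖_{L^p}` for all sets `E`, then
`‖f ∗ dσ‖_{L^r} ≤ C' (log q) ‖f‖_{L^p}` for all functions `f`, where `C'` depends only
on `C`, `d`, `p` (not on `q`, `S`, or `f`). -/
theorem statement17 (d : ℕ) (p r C : ℝ) (hp : 1 ≤ p) (hr : 1 ≤ r) (hC : 0 < C) :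
    ∃ C' : ℝ, 0 < C' ∧
      ∀ (F : Type) [Field F] [Fintype F], 2 ≤ Fintype.card F →
        ∀ S : Finset (Fin d → F), S.Nonempty →
          (∀ E : Finset (Fin d → F),
            (((Fintype.card F : ℝ) ^ d)⁻¹ *
                ∑ x : Fin d → F,
                  ‖(S.card : ℂ)⁻¹ * ∑ y ∈ S, (if x - y ∈ E then (1 : ℂ) else 0)‖ ^ r) ^
                ((1 : ℝ) / r) ≤
              C * (((Fintype.card F : ℝ) ^ d)⁻¹ *
                  ∑ x : Fin d → F, ‖(if x ∈ E then (1 : ℂ) else 0)‖ ^ p) ^ ((1 : ℝ) / p)) →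
          ∀ f : (Fin d → F) → ℂ,
            (((Fintype.card F : ℝ) ^ d)⁻¹ *
                ∑ x : Fin d → F, ‖(S.card : ℂ)⁻¹ * ∑ y ∈ S, f (x - y)‖ ^ r) ^
                ((1 : ℝ) / r) ≤
              C' * Real.log (Fintype.card F) *
                (((Fintype.card F : ℝ) ^ d)⁻¹ *
                    ∑ x : Fin d → F, ‖f x‖ ^ p) ^ ((1 : ℝ) / p) := by
  refine ⟨(1 + 2 * C * (d + 1)) / Real.log 2, by positivity, ?_⟩
  intro F _ _ hq S hS hres f
  have hcard : (Fintype.card F : ℝ) ^ d = Fintype.card (Fin d → F) := by simp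
  rw [hcard] at hres ⊢
  set J := Nat.clog 2 (Fintype.card (Fin d → F))
  have hlog2 : 0 < Real.log 2 := Real.log_pos one_lt_two
  have hlogq : Real.log 2 ≤ Real.log (Fintype.card F) :=
    Real.log_le_log two_pos (by exact_mod_cast hq)
  have hJ : (J : ℝ) * Real.log 2 ≤ d * Real.log (Fintype.card F) + Real.log 2 := by
    have h := natCast_clog_two_mul_log_two_le (Fintype.card (Fin d → F))
    rwa [← hcard, Real.log_pow] at h
  have hconst : 1 + 2 * C * J ≤ (1 + 2 * C * (d + 1)) / Real.log 2 * Real.log (Fintype.card F) := by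
    rw [div_mul_eq_mul_div, le_div_iff₀ hlog2]
    linarith [mul_le_mul_of_nonneg_left hJ hC.le, mul_le_mul_of_nonneg_left hlogq hC.le]
  calc avgLpNorm r (convAvg S f) ≤ (1 + 2 * C * J) * avgLpNorm p f :=
        avgLpNorm_convAvg_le_clog_mul hS hp hr hC.le hres f
    _ ≤ _ := mul_le_mul_of_nonneg_right hconst (avgLpNorm_nonneg p f)
end
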